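/- The automorphism group of the Kneser graph K(5,2) (the Petersen graph) has order 120, i.e. it is isomorphic to the symmetric group S_5 acting by permuting {1,2,3,4,5}. -/

import Mathlib

/-- The Kneser graph K(5,2) (the Petersen graph): vertices are 2-element subsets of
{1,...,5}, adjacent iff disjoint. -/
def petersen : SimpleGraph {s : Finset (Fin 5) // s.card = 2} where
  Adj a b := Disjoint a.1 b.1
  symm := ⟨fun a b h => h.symm⟩
  loopless := by
    constructor
    rintro ⟨s, hs⟩ h
    simp only [disjoint_self] at h
    simp [h] at hs

/-!
An automorphism of the Petersen graph preserves the relation "not disjoint", so it maps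
intersecting families of pairs to intersecting families of pairs. An intersecting family of
more than three pairs is a star `{s | x ∈ s}`, the only other maximal ones being triangles
`{pq, pr, qr}`. Hence every automorphism maps each star `x` into a star `σ x`; `σ` is injective
because two disjoint pairs cannot land in the same star, and then the automorphism is the one
induced by the permutation `σ`.
-/

open Finset

section

variable {α : Type*} [DecidableEq α]

lemma Finset.exists_eq_pair_of_mem {s : Finset α} {x : α} (hs : #s = 2) (hx : x ∈ s) :
    ∃ y, x ≠ y ∧ s = {x, y} := by
  obtain ⟨y, hy⟩ := card_eq_one.mp (by rw [card_erase_of_mem hx, hs] : #(s.erase x) = 1)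
  refine ⟨y, fun hxy => ?_, ?_⟩
  · simpa [hxy] using hy.ge (mem_singleton_self y)
  · rw [← insert_erase hx, hy]

lemma Finset.subset_insert_of_not_disjoint {a b c d : Finset α} {p r : α} (ha : #a = 2)
    (hb : #b = 2) (hc : #c = 2) (hd : #d = 2) (hpa : p ∈ a) (hpb : p ∈ b) (hpc : p ∉ c)
    (hrb : r ∈ b) (hra : r ∉ a) (hca : ¬ Disjoint c a) (hcb : ¬ Disjoint c b)
    (hda : ¬ Disjoint d a) (hdb : ¬ Disjoint d b) (hdc : ¬ Disjoint d c) :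
    d ⊆ insert p c := by
  obtain ⟨a₁, a₂, -, rfl⟩ := card_eq_two.mp ha
  obtain ⟨b₁, b₂, -, rfl⟩ := card_eq_two.mp hb
  obtain ⟨c₁, c₂, -, rfl⟩ := card_eq_two.mp hc
  obtain ⟨d₁, d₂, -, rfl⟩ := card_eq_two.mp hd
  simp only [not_disjoint_iff, mem_insert, mem_singleton, insert_subset_iff,
    singleton_subset_iff] at *
  grind

lemma Set.Intersecting.exists_forall_mem_of_card_eq_two {𝒜 : Finset (Finset α)}
    (h𝒜 : (𝒜 : Set (Finset α)).Intersecting) (h2 : ∀ a ∈ 𝒜, #a = 2) (h4 : 3 < #𝒜) :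
    ∃ p, ∀ a ∈ 𝒜, p ∈ a := by
  obtain ⟨a, ha, b, hb, hab⟩ := one_lt_card.mp (by omega : 1 < #𝒜)
  obtain ⟨p, hpa, hpb⟩ := Finset.not_disjoint_iff.mp (h𝒜 ha hb)
  by_contra! hp
  obtain ⟨c, hc, hpc⟩ := hp p
  obtain ⟨r, hrb, hra⟩ := not_subset.mp fun hba =>
    hab (Finset.eq_of_subset_of_card_le hba (by rw [h2 a ha, h2 b hb])).symm
  -- `𝒜` would be contained in the triangle on the three points of `insert p c`.
  have h𝒜c : 𝒜 ⊆ Finset.powersetCard 2 (insert p c) := fun d hd =>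
    mem_powersetCard.mpr
      ⟨subset_insert_of_not_disjoint (h2 a ha) (h2 b hb) (h2 c hc) (h2 d hd) hpa hpb hpc hrb hra
        (h𝒜 hc ha) (h𝒜 hc hb) (h𝒜 hd ha) (h𝒜 hd hb) (h𝒜 hd hc), h2 d hd⟩
  have h𝒜3 := Finset.card_le_card h𝒜c
  rw [card_powersetCard, card_insert_of_notMem hpc, h2 c hc] at h𝒜3
  exact absurd (h4.trans_le h𝒜3) (by decide)

end

def kneserGraph (α : Type*) (n : ℕ) [NeZero n] : SimpleGraph (Set.powersetCard α n) where
  Adj s t := Disjoint (s : Finset α) t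
  symm := ⟨fun _ _ h => h.symm⟩
  loopless := ⟨fun s h =>
    NeZero.ne n (by simpa [disjoint_self.mp h] using (Set.powersetCard.card_eq s).symm)⟩

namespace kneserGraph

open Equiv Set.powersetCard
open scoped Pointwise

variable {α : Type*} {n : ℕ} [NeZero n]

@[simp]
lemma adj_iff {s t : Set.powersetCard α n} :
    (kneserGraph α n).Adj s t ↔ Disjoint (s : Finset α) t := Iff.rfl

variable [DecidableEq α]

def permToAut : Perm α →* (kneserGraph α n ≃g kneserGraph α n) where
  toFun π := ⟨MulAction.toPerm π, fun {s t} => by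
    simp only [adj_iff, MulAction.toPerm_apply, Set.powersetCard.coe_smul, ← disjoint_coe,
      coe_smul_finset, Set.disjoint_smul_set]⟩
  map_one' := by ext; simp
  map_mul' π ρ := by ext; simp [mul_smul]

lemma permToAut_injective (hα : n < ENat.card α) :
    Function.Injective (permToAut : Perm α →* (kneserGraph α n ≃g kneserGraph α n)) := by
  refine (injective_iff_map_eq_one _).mpr fun π hπ => ?_
  have hπ' := (mulAction_faithful (G := Perm α) NeZero.one_le hα).mp
    (Equiv.ext fun s => DFunLike.congr_fun hπ s)
  ext x
  exact DFunLike.congr_fun hπ' x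

variable [Fintype α]

lemma exists_forall_mem_aut_of_mem (φ : kneserGraph α 2 ≃g kneserGraph α 2)
    (hα : 4 < Fintype.card α) (x : α) :
    ∃ p, ∀ s : Set.powersetCard α 2, x ∈ (s : Finset α) → p ∈ (φ s : Finset α) := by
  let imagePair (y : {y // y ≠ x}) : Finset α := φ (ofCard (card_pair y.2.symm))
  have imagePair_injective : Function.Injective imagePair := fun y z h => by
    have hyz : ({x, (y : α)} : Finset α) = {x, (z : α)} :=
      congrArg Subtype.val (φ.injective (Subtype.val_injective h))
    have hy : (y : α) ∈ ({x, (z : α)} : Finset α) := hyz ▸ by simp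
    exact Subtype.ext (by simpa [y.2] using hy)
  obtain ⟨p, hp⟩ := Set.Intersecting.exists_forall_mem_of_card_eq_two
    (𝒜 := univ.image imagePair)
    (by
      simp only [coe_image, Set.Intersecting, Set.mem_image, mem_coe]
      rintro _ ⟨y, -, rfl⟩ _ ⟨z, -, rfl⟩ hyz
      exact Finset.disjoint_left.mp (φ.map_rel_iff.mp hyz) (mem_insert_self x _)
        (mem_insert_self x _))
    (by
      simp only [mem_image]
      rintro _ ⟨y, -, rfl⟩
      exact (φ _).2)
    (by
      rw [card_image_of_injective _ imagePair_injective]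
      simp only [card_univ, Fintype.card_subtype_compl, Fintype.card_unique]
      omega)
  refine ⟨p, fun s hx => ?_⟩
  obtain ⟨y, hxy, hs⟩ := exists_eq_pair_of_mem s.2 hx
  obtain rfl : s = ofCard (card_pair hxy) := Subtype.ext hs
  exact hp _ (mem_image_of_mem _ (mem_univ (⟨y, hxy.symm⟩ : {y // y ≠ x})))

noncomputable def autPoint (φ : kneserGraph α 2 ≃g kneserGraph α 2)
    (hα : 4 < Fintype.card α) (x : α) : α :=
  (exists_forall_mem_aut_of_mem φ hα x).choose

section

variable {φ : kneserGraph α 2 ≃g kneserGraph α 2} (hα : 4 < Fintype.card α)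

lemma autPoint_mem {s : Set.powersetCard α 2} {x : α} (hx : x ∈ (s : Finset α)) :
    autPoint φ hα x ∈ (φ s : Finset α) :=
  (exists_forall_mem_aut_of_mem φ hα x).choose_spec s hx

lemma autPoint_injective : Function.Injective (autPoint φ hα) := by
  intro x y hxy
  by_contra hne
  obtain ⟨k, hk, l, hl, hkl⟩ := one_lt_card.mp (by
    rw [card_compl, card_pair hne]
    omega : 1 < #({x, y}ᶜ : Finset α))
  simp only [Finset.mem_compl, mem_insert, mem_singleton, not_or] at hk hl
  -- `{x, k}` and `{y, l}` are disjoint, yet their images both contain `autPoint φ hα x`.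
  have hdisj : (kneserGraph α 2).Adj (ofCard (card_pair (Ne.symm hk.1)))
      (ofCard (card_pair (Ne.symm hl.2))) := by
    simp only [adj_iff, val_ofCard, disjoint_insert_left, disjoint_insert_right, mem_insert,
      mem_singleton, disjoint_singleton]
    grind
  exact Finset.disjoint_left.mp (φ.map_rel_iff.mpr hdisj)
    (autPoint_mem hα (mem_insert_self _ _)) (hxy ▸ autPoint_mem hα (mem_insert_self _ _))

lemma coe_aut_eq_image_autPoint (s : Set.powersetCard α 2) :
    (φ s : Finset α) = (s : Finset α).image (autPoint φ hα) := by
  obtain ⟨x, y, hxy, hs⟩ := card_eq_two.mp s.2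
  refine (Finset.eq_of_subset_of_card_le ?_ ?_).symm
  · rw [hs, image_insert, image_singleton, insert_subset_iff, singleton_subset_iff]
    exact ⟨autPoint_mem hα (by simp [hs]), autPoint_mem hα (by simp [hs])⟩
  · rw [(φ s).2, hs, image_insert, image_singleton, card_pair ((autPoint_injective hα).ne hxy)]

end

lemma permToAut_surjective (hα : 4 < Fintype.card α) :
    Function.Surjective (permToAut : Perm α →* (kneserGraph α 2 ≃g kneserGraph α 2)) := by
  intro φ
  have hσ := Finite.injective_iff_bijective.mp (autPoint_injective (φ := φ) hα)
  refine ⟨.ofBijective _ hσ, ?_⟩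
  ext s : 2
  simp [permToAut, coe_aut_eq_image_autPoint hα, smul_finset_def]

noncomputable def permMulEquivAut (hα : 4 < Fintype.card α) :
    Perm α ≃* (kneserGraph α 2 ≃g kneserGraph α 2) :=
  .ofBijective permToAut
    ⟨permToAut_injective (by rw [ENat.card_eq_coe_fintype_card]; norm_cast; omega),
      permToAut_surjective hα⟩

end kneserGraph

/-- The automorphism group of the Petersen graph has order 120 and is isomorphic to
the symmetric group `S₅`. -/
theorem petersen_aut_group :
    Nat.card (petersen ≃g petersen) = 120 ∧
    Nonempty ((petersen ≃g petersen) ≃* Equiv.Perm (Fin 5)) := by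
  -- `petersen` is `kneserGraph (Fin 5) 2` once `Set.powersetCard` is unfolded.
  have e : Equiv.Perm (Fin 5) ≃* (petersen ≃g petersen) :=
    kneserGraph.permMulEquivAut (α := Fin 5) (by simp)
  refine ⟨?_, ⟨e.symm⟩⟩
  rw [← Nat.card_congr e.toEquiv, Nat.card_perm, Nat.card_fin]
  rfl
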